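/- Let Y be a closed subspace of c₀(ℤⁿ) contained in the set of Fourier coefficient sequences of L¹(𝕋ⁿ) functions. If Y is reflexive, then Y is finite dimensional. -/

import Mathlib

open MeasureTheory NormedSpace ZeroAtInfty

/-- A Banach space is reflexive if the canonical embedding into its bidual is
surjective. -/
def IsReflexiveSpace (W : Type*) [NormedAddCommGroup W] [NormedSpace ℂ W] : Prop :=
  Function.Surjective (inclusionInDoubleDual ℂ W)

/-- The fundamental cube `[-π,π)ⁿ` for the torus `𝕋ⁿ`. -/
def torusCube (n : ℕ) : Set (EuclideanSpace ℝ (Fin n)) :=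
  {x | ∀ k, x k ∈ Set.Ico (-Real.pi) Real.pi}

/-- The `ξ`-th Fourier coefficient of a function on the torus `𝕋ⁿ`,
`𝓕f(ξ) = ∫_{𝕋ⁿ} e^{-i⟨x,ξ⟩} f(x) dx`. -/
noncomputable def torusFourierCoeff {n : ℕ} (f : EuclideanSpace ℝ (Fin n) → ℂ)
    (ξ : Fin n → ℤ) : ℂ :=
  ∫ x in torusCube n,
    Complex.exp (-(Complex.I * (∑ k, x k * (ξ k : ℝ) : ℝ))) * f x

/-!
In a reflexive space every bounded sequence has, along any ultrafilter, a weak limit in the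
space itself: the ultrafilter limit of `φ (x N)` is a functional on the dual, hence given by a
point. In an infinite-dimensional subspace of `c₀(X)` with `X` discrete, a gliding hump yields unit
vectors `f k`, each vanishing on a finite set `E k` and at most `ε k` off a larger finite set
`E (k + 1)`. With `∑ ε k ≤ 1/4`, the partial sums of the `f k` are bounded by `2`, while at a
point of the `k`-th hump `E (k + 1) \ E k` where `|f k| > 3/4` every later partial sum is at
least `1/2` in modulus. Their weak limit is therefore at least `1/2` at infinitely many points,
so it does not vanish at infinity.
-/

open Filter Topology

lemma IsReflexiveSpace.exists_forall_tendsto {W : Type*} [NormedAddCommGroup W]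
    [NormedSpace ℂ W] (hW : IsReflexiveSpace W) {ι : Type*} (U : Ultrafilter ι) {x : ι → W}
    {C : ℝ} (hx : ∀ i, ‖x i‖ ≤ C) :
    ∃ y : W, ∀ φ : StrongDual ℂ W, Tendsto (fun i => φ (x i)) U (𝓝 (φ y)) := by
  have hbound (φ : StrongDual ℂ W) (i : ι) : ‖φ (x i)‖ ≤ ‖φ‖ * C :=
    φ.le_of_opNorm_le_of_le le_rfl (hx i)
  have hlim (φ : StrongDual ℂ W) : ∃ z, Tendsto (fun i => φ (x i)) U (𝓝 z) := by
    obtain ⟨z, -, hz⟩ := (isCompact_closedBall (0 : ℂ) (‖φ‖ * C)).ultrafilter_le_nhds'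
      (U.map fun i => φ (x i))
      (Ultrafilter.mem_map.2 (univ_mem' fun i => by simpa using hbound φ i))
    exact ⟨z, hz⟩
  choose z hz using hlim
  let Λ : StrongDual ℂ (StrongDual ℂ W) := LinearMap.mkContinuous
    { toFun := z
      map_add' := fun φ ψ => tendsto_nhds_unique (hz (φ + ψ)) ((hz φ).add (hz ψ))
      map_smul' := fun c φ => tendsto_nhds_unique (hz (c • φ)) ((hz φ).const_smul c) }
    C fun φ => by
      rw [mul_comm]
      exact le_of_tendsto (hz φ).norm (Eventually.of_forall (hbound φ))
  obtain ⟨y, hy⟩ := hW Λ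
  refine ⟨y, fun φ => ?_⟩
  have hyφ : φ y = z φ := by simpa [Λ] using DFunLike.congr_fun hy φ
  rw [hyφ]
  exact hz φ

section SumEstimates

variable {ι V : Type*} [DecidableEq ι] [SeminormedAddCommGroup V] {a : ι → V} {ε : ι → ℝ}
  {j : ι}

lemma norm_sum_erase_le (hε : ∀ i, 0 ≤ ε i) (h : ∀ i ≠ j, ‖a i‖ ≤ ε i) (s : Finset ι) :
    ‖∑ i ∈ s.erase j, a i‖ ≤ ∑ i ∈ s, ε i :=
  calc ‖∑ i ∈ s.erase j, a i‖ ≤ ∑ i ∈ s.erase j, ‖a i‖ := norm_sum_le _ _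
    _ ≤ ∑ i ∈ s.erase j, ε i := Finset.sum_le_sum fun i hi => h i (Finset.ne_of_mem_erase hi)
    _ ≤ ∑ i ∈ s, ε i :=
      Finset.sum_le_sum_of_subset_of_nonneg (Finset.erase_subset _ _) fun i _ _ => hε i

lemma norm_sum_le_norm_add (hε : ∀ i, 0 ≤ ε i) (h : ∀ i ≠ j, ‖a i‖ ≤ ε i) (s : Finset ι) :
    ‖∑ i ∈ s, a i‖ ≤ ‖a j‖ + ∑ i ∈ s, ε i := by
  by_cases hj : j ∈ s
  · rw [← Finset.add_sum_erase s a hj]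
    exact (norm_add_le _ _).trans (add_le_add_right (norm_sum_erase_le hε h s) _)
  · calc ‖∑ i ∈ s, a i‖ = ‖∑ i ∈ s.erase j, a i‖ := by rw [Finset.erase_eq_of_notMem hj]
      _ ≤ ∑ i ∈ s, ε i := norm_sum_erase_le hε h s
      _ ≤ ‖a j‖ + ∑ i ∈ s, ε i := le_add_of_nonneg_left (norm_nonneg _)

lemma norm_le_norm_sum_add (hε : ∀ i, 0 ≤ ε i) (h : ∀ i ≠ j, ‖a i‖ ≤ ε i) {s : Finset ι}
    (hj : j ∈ s) : ‖a j‖ ≤ ‖∑ i ∈ s, a i‖ + ∑ i ∈ s, ε i := by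
  rw [← Finset.add_sum_erase s a hj]
  exact (norm_le_add_norm_add _ _).trans (add_le_add_right (norm_sum_erase_le hε h s) _)

end SumEstimates

structure IsGlidingHump {X V : Type*} [SeminormedAddCommGroup V] (f : ℕ → X → V)
    (E : ℕ → Set X) (ε : ℕ → ℝ) : Prop where
  monotone : Monotone E
  eq_zero : ∀ k, ∀ x ∈ E k, f k x = 0
  norm_le : ∀ k, ∀ x ∉ E (k + 1), ‖f k x‖ ≤ ε k
  nonneg : ∀ k, 0 ≤ ε k

namespace IsGlidingHump

variable {X V : Type*} [SeminormedAddCommGroup V] {f : ℕ → X → V} {E : ℕ → Set X}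
  {ε : ℕ → ℝ}

lemma norm_apply_le_of_succ_ne (h : IsGlidingHump f E ε) {x : X} {m : ℕ} (hxm : x ∈ E m)
    (hmin : ∀ i < m, x ∉ E i) {k : ℕ} (hk : k + 1 ≠ m) : ‖f k x‖ ≤ ε k := by
  rcases lt_or_gt_of_ne hk with hkm | hkm
  · exact h.norm_le k x (hmin _ hkm)
  · rw [h.eq_zero k x (h.monotone (by omega : m ≤ k) hxm), norm_zero]
    exact h.nonneg k

lemma exists_forall_ne_norm_apply_le (h : IsGlidingHump f E ε) (x : X) :
    ∃ j, ∀ k ≠ j, ‖f k x‖ ≤ ε k := by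
  classical
  by_cases hx : ∃ m, x ∈ E m
  · exact ⟨Nat.find hx - 1, fun k hk =>
      h.norm_apply_le_of_succ_ne (Nat.find_spec hx) (fun _ => Nat.find_min hx) (by omega)⟩
  · exact ⟨0, fun k _ => h.norm_le k x fun hxk => hx ⟨_, hxk⟩⟩

lemma norm_sum_apply_le (h : IsGlidingHump f E ε) {x : X} {C : ℝ} (hC : ∀ k, ‖f k x‖ ≤ C)
    (s : Finset ℕ) : ‖∑ k ∈ s, f k x‖ ≤ C + ∑ k ∈ s, ε k := by
  obtain ⟨j, hj⟩ := h.exists_forall_ne_norm_apply_le x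
  exact (norm_sum_le_norm_add h.nonneg hj s).trans (add_le_add_left (hC j) _)

lemma norm_apply_le_norm_sum_apply_add (h : IsGlidingHump f E ε) {k : ℕ} {x : X}
    (hx : x ∈ E (k + 1) \ E k) {s : Finset ℕ} (hk : k ∈ s) :
    ‖f k x‖ ≤ ‖∑ i ∈ s, f i x‖ + ∑ i ∈ s, ε i :=
  norm_le_norm_sum_add h.nonneg
    (fun _ hi => h.norm_apply_le_of_succ_ne hx.1
      (fun _ hlt hmem => hx.2 (h.monotone (by omega) hmem)) (by omega)) hk

lemma mem_diff_of_lt_norm_apply (h : IsGlidingHump f E ε) {k : ℕ} {x : X}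
    (hx : ε k < ‖f k x‖) : x ∈ E (k + 1) \ E k := by
  refine ⟨by_contra fun hx' => (h.norm_le k x hx').not_gt hx, fun hx' => ?_⟩
  rw [h.eq_zero k x hx', norm_zero] at hx
  exact (h.nonneg k).not_gt hx

end IsGlidingHump

lemma Monotone.injective_of_mem_succ_diff {X : Type*} {E : ℕ → Set X} (hE : Monotone E)
    {x : ℕ → X} (hx : ∀ k, x k ∈ E (k + 1) \ E k) : Function.Injective x :=
  .of_lt_imp_ne fun k l hkl hxkl => (hx l).2 (hxkl ▸ hE hkl (hx k).1)

namespace ZeroAtInftyContinuousMap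

variable {X : Type*} [TopologicalSpace X]

lemma norm_apply_le (F : C₀(X, ℂ)) (x : X) : ‖F x‖ ≤ ‖F‖ := by
  rw [← norm_toBCF_eq_norm]
  exact F.toBCF.norm_coe_le_norm x

lemma norm_le_of_forall_apply_le {F : C₀(X, ℂ)} {C : ℝ} (hC : 0 ≤ C) (h : ∀ x, ‖F x‖ ≤ C) :
    ‖F‖ ≤ C := by
  rw [← norm_toBCF_eq_norm]
  exact (BoundedContinuousFunction.norm_le hC).2 h

lemma exists_lt_norm_apply {F : C₀(X, ℂ)} {r : ℝ} (hr₀ : 0 ≤ r) (hr : r < ‖F‖) :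
    ∃ x, r < ‖F x‖ := by
  by_contra! h
  exact hr.not_ge (norm_le_of_forall_apply_le hr₀ h)

noncomputable def evalCLM (x : X) : C₀(X, ℂ) →L[ℂ] ℂ :=
  LinearMap.mkContinuous
    { toFun := fun F => F x
      map_add' := fun _ _ => rfl
      map_smul' := fun _ _ => rfl }
    1 fun F => by simpa using F.norm_apply_le x

@[simp]
lemma evalCLM_apply (x : X) (F : C₀(X, ℂ)) : evalCLM x F = F x := rfl

lemma exists_mem_norm_eq_one_forall_eq_zero {Y : Submodule ℂ C₀(X, ℂ)}
    (hY : ¬ FiniteDimensional ℂ Y) {E : Set X} (hE : E.Finite) :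
    ∃ F ∈ Y, ‖F‖ = 1 ∧ ∀ x ∈ E, F x = 0 := by
  have := hE.to_subtype
  let restrict : Y →ₗ[ℂ] (E → ℂ) :=
    LinearMap.pi fun x : E => (evalCLM (x : X)).toLinearMap.comp Y.subtype
  obtain ⟨G, hGE, hG⟩ : ∃ G, restrict G = 0 ∧ G ≠ 0 := by
    by_contra! h
    refine hY (.of_injective restrict fun G H hGH => sub_eq_zero.mp (h _ ?_))
    rw [map_sub, hGH, sub_self]
  have hG' : (G : C₀(X, ℂ)) ≠ 0 := by simpa using hG
  refine ⟨(‖(G : C₀(X, ℂ))‖⁻¹ : ℂ) • G, Y.smul_mem _ G.2, norm_smul_inv_norm hG',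
    fun x hx => ?_⟩
  have hGx : (G : C₀(X, ℂ)) x = 0 := congr_fun hGE ⟨x, hx⟩
  simp [hGx]

variable [DiscreteTopology X]

lemma finite_setOf_le_norm (F : C₀(X, ℂ)) {ε : ℝ} (hε : 0 < ε) :
    {x | ε ≤ ‖F x‖}.Finite := by
  obtain ⟨K, hK, hKF⟩ :=
    mem_cocompact.mp (zero_at_infty F (Metric.ball_mem_nhds (0 : ℂ) hε))
  refine hK.finite_of_discrete.subset fun x hx => ?_
  by_contra hxK
  have hsmall : ‖F x‖ < ε := by simpa using hKF hxK
  exact hsmall.not_ge hx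

lemma exists_isGlidingHump {Y : Submodule ℂ C₀(X, ℂ)} (hY : ¬ FiniteDimensional ℂ Y)
    {ε : ℕ → ℝ} (hε : ∀ k, 0 < ε k) :
    ∃ (f : ℕ → C₀(X, ℂ)) (E : ℕ → Set X),
      IsGlidingHump (fun k => ⇑(f k)) E ε ∧ ∀ k, f k ∈ Y ∧ ‖f k‖ = 1 := by
  classical
  choose F hFY hFnorm hFzero using
    fun s : Finset X => exists_mem_norm_eq_one_forall_eq_zero hY s.finite_toSet
  let E : ℕ → Finset X := fun k =>
    Nat.rec (motive := fun _ => Finset X) ∅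
      (fun k s => s ∪ ((F s).finite_setOf_le_norm (hε k)).toFinset) k
  refine ⟨fun k => F (E k), fun k => E k, ?_, fun k => ⟨hFY _, hFnorm _⟩⟩
  refine ⟨?_, fun k => hFzero (E k), fun k x hx => ?_, fun k => (hε k).le⟩
  · exact monotone_nat_of_le_succ fun k => Finset.coe_subset.2 Finset.subset_union_left
  · refine le_of_lt (not_le.1 fun hle => hx ?_)
    exact Finset.mem_union_right _ (by simpa using hle)

theorem finiteDimensional_of_isReflexiveSpace (Y : Submodule ℂ C₀(X, ℂ))
    (hY : IsReflexiveSpace Y) : FiniteDimensional ℂ Y := by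
  by_contra hfin
  set ε : ℕ → ℝ := fun k => (1 / 2) ^ k / 8
  have hε : ∀ k, 0 < ε k := fun k => by positivity
  have hε_le : ∀ k, ε k ≤ 1 / 8 := fun k =>
    div_le_div_of_nonneg_right (pow_le_one₀ (by norm_num) (by norm_num)) (by norm_num)
  have hε_sum : ∀ N, ∑ k ∈ Finset.range N, ε k ≤ 1 / 4 := fun N => by
    rw [← Finset.sum_div]
    linarith [sum_geometric_two_le N]
  obtain ⟨f, E, hf, hfY⟩ := exists_isGlidingHump hfin hε
  let G : ℕ → Y := fun N => ⟨∑ k ∈ Finset.range N, f k, Y.sum_mem fun k _ => (hfY k).1⟩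
  have hG_apply (N : ℕ) (x : X) : (G N : C₀(X, ℂ)) x = ∑ k ∈ Finset.range N, f k x :=
    map_sum (evalCLM x) f _
  have hG_norm (N : ℕ) : ‖G N‖ ≤ 2 := norm_le_of_forall_apply_le (by norm_num) fun x => by
    calc ‖(G N : C₀(X, ℂ)) x‖ ≤ 1 + 1 / 4 := by
          rw [hG_apply]
          refine (hf.norm_sum_apply_le (fun k => ?_) _).trans (add_le_add_right (hε_sum N) _)
          exact (hfY k).2 ▸ (f k).norm_apply_le x
      _ ≤ 2 := by norm_num
  obtain ⟨F, hF⟩ := hY.exists_forall_tendsto (.of atTop) hG_norm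
  choose x hx using fun k => exists_lt_norm_apply (F := f k) (r := 3 / 4) (by norm_num)
    (by rw [(hfY k).2]; norm_num)
  have hxE (k : ℕ) : x k ∈ E (k + 1) \ E k :=
    hf.mem_diff_of_lt_norm_apply ((hε_le k).trans_lt (by linarith [hx k]))
  have hFx (k : ℕ) : 1 / 2 ≤ ‖(F : C₀(X, ℂ)) (x k)‖ := by
    refine ge_of_tendsto (hF ((evalCLM (x k)).comp Y.subtypeL)).norm ?_
    filter_upwards [(eventually_gt_atTop k).filter_mono (Ultrafilter.of_le _)] with N hN
    have := hf.norm_apply_le_norm_sum_apply_add (hxE k) (Finset.mem_range.2 hN)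
    simp only [ContinuousLinearMap.comp_apply, Submodule.subtypeL_apply, evalCLM_apply,
      hG_apply]
    linarith [hx k, hε_sum N]
  exact Set.infinite_of_injective_forall_mem (s := {y | 1 / 2 ≤ ‖(F : C₀(X, ℂ)) y‖})
    (hf.monotone.injective_of_mem_succ_diff hxE) hFx (finite_setOf_le_norm _ (by norm_num))

end ZeroAtInftyContinuousMap

theorem finiteDimensional_of_reflexive_torus_fourier_subspace_general {n : ℕ}
    (Y : Subspace ℂ C₀(Fin n → ℤ, ℂ))
    (hrefl : IsReflexiveSpace ↥Y) :
    FiniteDimensional ℂ ↥Y :=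
  ZeroAtInftyContinuousMap.finiteDimensional_of_isReflexiveSpace Y hrefl

/-- A reflexive closed subspace of `c₀(ℤⁿ)` consisting of Fourier coefficient
sequences of `L¹(𝕋ⁿ)` functions is finite dimensional. -/
theorem finiteDimensional_of_reflexive_torus_fourier_subspace {n : ℕ}
    (Y : Subspace ℂ C₀(Fin n → ℤ, ℂ))
    (hclosed : IsClosed (Y : Set C₀(Fin n → ℤ, ℂ)))
    (hsub : ∀ F ∈ Y, ∃ f : EuclideanSpace ℝ (Fin n) → ℂ,
      IntegrableOn f (torusCube n) ∧ ∀ ξ, F ξ = torusFourierCoeff f ξ)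
    (hrefl : IsReflexiveSpace ↥Y) :
    FiniteDimensional ℂ ↥Y :=
  finiteDimensional_of_reflexive_torus_fourier_subspace_general Y hrefl
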